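/- Let σ̄ ∈ S₀ ∩ int(dom V*) be a critical point of D, i.e., ∇D(σ̄) = 0, and set x̄ := A(σ̄)⁻¹b(σ̄). Then (x̄,σ̄) is a critical point of Ξ; consequently x̄ ∈ X₀, x̄ is a critical point of f, f(x̄) = Ξ(x̄,σ̄) = D(σ̄), and if in addition A(σ̄) is positive semidefinite then f(x̄) = inf_{x ∈ dom f} f(x) = sup_{σ ∈ S_col⁺} D(σ) = D(σ̄). -/

import Mathlib

/-!
Near `σ̄` the matrix `A(σ)` stays invertible, so `D(σ) = Ξ(x(σ), σ)` with the differentiable map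
`x(σ) = A(σ)⁻¹ b(σ)`. Since `∇ₓΞ(x̄, σ̄) = 0`, the chain rule gives `∇D(σ̄) = q(x̄) − ∇V*(σ̄)`, so
`q(x̄) = ∇V*(σ̄)`.

Differentiability of `V*` at `σ̄` bounds every maximizing sequence of the supremum defining
`V*(σ̄)` in each direction, forcing it to converge to `∇V*(σ̄)`; closedness of the epigraph of `V`
then shows that `q(x̄) ∈ dom V` attains the supremum. Equality in Fenchel–Young means
`σ̄ ∈ ∂V(q(x̄))`, and essential smoothness puts `q(x̄)` in `int(dom V)` with `∇V(q(x̄)) = σ̄`,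
which is exactly criticality of `f` at `x̄`.

When `A(σ) ⪰ 0`, `Ξ(·, σ)` is minimized by every solution of `A(σ) x = b(σ)`, and Fenchel–Young
gives `Ξ(x, σ) ≤ f(x)`; this weak duality `D(σ) ≤ f(x)` is an equality at `(x̄, σ̄)`.
-/

open Matrix Set

noncomputable section

/-- The quadratic function `x ↦ ½⟨x, A x⟩ − ⟨b, x⟩ + c`. -/
def qf {n : ℕ} (A : Matrix (Fin n) (Fin n) ℝ) (b : Fin n → ℝ) (c : ℝ) (x : Fin n → ℝ) : ℝ :=
  (1 / 2 : ℝ) * (x ⬝ᵥ A.mulVec x) - b ⬝ᵥ x + c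

/-- `A(σ) = A₀ + Σ σ_k A_k`. -/
def Amat {n m : ℕ} (A0 : Matrix (Fin n) (Fin n) ℝ) (A : Fin m → Matrix (Fin n) (Fin n) ℝ)
    (σ : Fin m → ℝ) : Matrix (Fin n) (Fin n) ℝ :=
  A0 + ∑ k, σ k • A k

/-- `b(σ) = b₀ + Σ σ_k b_k`. -/
def bvec {n m : ℕ} (b0 : Fin n → ℝ) (b : Fin m → Fin n → ℝ) (σ : Fin m → ℝ) : Fin n → ℝ :=
  b0 + ∑ k, σ k • b k

/-- `q(x) = (q₁(x), …, q_m(x))`. -/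
def qvec {n m : ℕ} (A : Fin m → Matrix (Fin n) (Fin n) ℝ) (b : Fin m → Fin n → ℝ)
    (c : Fin m → ℝ) (x : Fin n → ℝ) : Fin m → ℝ :=
  fun i => qf (A i) (b i) (c i) x

/-- Subdifferential of an (extended-real-valued) convex function represented by its
finite part `V` and its effective domain `dV`; it is empty outside `dV`. -/
def subdiff {m : ℕ} (V : (Fin m → ℝ) → ℝ) (dV : Set (Fin m → ℝ)) (y : Fin m → ℝ) :
    Set (Fin m → ℝ) :=
  {σ | y ∈ dV ∧ ∀ y' ∈ dV, (y' - y) ⬝ᵥ σ ≤ V y' - V y}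

/-- `V ∈ Γ(ℝᵐ)`: proper, convex and lower semicontinuous (closed epigraph), where the
extended-real-valued function is represented by its finite part `V` on its domain `dV`. -/
def properLscConvex {m : ℕ} (V : (Fin m → ℝ) → ℝ) (dV : Set (Fin m → ℝ)) : Prop :=
  dV.Nonempty ∧ ConvexOn ℝ dV V ∧
    IsClosed {p : (Fin m → ℝ) × ℝ | p.1 ∈ dV ∧ V p.1 ≤ p.2}

/-- `(Vs, dVs)` is the Fenchel conjugate of `(V, dV)`:
`dVs` is the set where the supremum is finite and `Vs` its value there. -/
def isConjugate {m : ℕ} (V : (Fin m → ℝ) → ℝ) (dV : Set (Fin m → ℝ))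
    (Vs : (Fin m → ℝ) → ℝ) (dVs : Set (Fin m → ℝ)) : Prop :=
  dVs = {σ | BddAbove ((fun y => y ⬝ᵥ σ - V y) '' dV)} ∧
    ∀ σ ∈ dVs, Vs σ = sSup ((fun y => y ⬝ᵥ σ - V y) '' dV)

/-- The continuous linear functional `v ↦ ⟨g, v⟩`. -/
def dotCLM {k : ℕ} (g : Fin k → ℝ) : (Fin k → ℝ) →L[ℝ] ℝ :=
  LinearMap.toContinuousLinearMap
    { toFun := fun v => g ⬝ᵥ v
      map_add' := fun u v => by simp [dotProduct_add]
      map_smul' := fun t v => by simp [dotProduct_smul, smul_eq_mul] }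

/-- The continuous linear map `v ↦ M v`. -/
def matCLM {k l : ℕ} (M : Matrix (Fin l) (Fin k) ℝ) : (Fin k → ℝ) →L[ℝ] (Fin l → ℝ) :=
  LinearMap.toContinuousLinearMap M.mulVecLin

/-- `V ∈ Γ_sc(ℝᵐ)`: a proper lsc convex function of Legendre type, i.e. essentially smooth
(differentiable on the nonempty interior of its domain, with gradient `gV`, and with empty
subdifferential outside this interior) and essentially strictly convex. -/
def LegendreType {m : ℕ} (V : (Fin m → ℝ) → ℝ) (dV : Set (Fin m → ℝ))
    (gV : (Fin m → ℝ) → (Fin m → ℝ)) : Prop :=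
  (interior dV).Nonempty ∧
  (∀ y ∈ interior dV, HasFDerivAt V (dotCLM (gV y)) y) ∧
  (∀ y, y ∉ interior dV → subdiff V dV y = ∅) ∧
  StrictConvexOn ℝ (interior dV) V

open Filter Topology

@[simp] lemma dotCLM_apply {k : ℕ} (g v : Fin k → ℝ) : dotCLM g v = g ⬝ᵥ v := rfl

lemma dotCLM_injective {k : ℕ} : Function.Injective (dotCLM (k := k)) := by
  intro g h hgh
  funext i
  simpa using congrArg (fun L => L (Pi.single i 1)) hgh

section Calculus

variable {E : Type*} [NormedAddCommGroup E] [NormedSpace ℝ E]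

theorem HasFDerivAt.dotProduct {k : ℕ} {f g : E → Fin k → ℝ} {F G : E →L[ℝ] (Fin k → ℝ)}
    {x : E} (hf : HasFDerivAt f F x) (hg : HasFDerivAt g G x) :
    HasFDerivAt (fun e => f e ⬝ᵥ g e) ((dotCLM (g x)).comp F + (dotCLM (f x)).comp G) x := by
  have hsum := HasFDerivAt.fun_sum (u := Finset.univ) fun i _ =>
    (hasFDerivAt_pi'.1 hf i).mul (hasFDerivAt_pi'.1 hg i)
  refine hsum.congr_fderiv ?_
  ext v
  simp [Finset.sum_add_distrib]
  exact add_comm _ _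

lemma hasFDerivAt_qf {n : ℕ} {M : Matrix (Fin n) (Fin n) ℝ} (hM : M.IsSymm)
    (b : Fin n → ℝ) (c : ℝ) (x : Fin n → ℝ) :
    HasFDerivAt (qf M b c) (dotCLM (M *ᵥ x - b)) x := by
  have hquad := (hasFDerivAt_id x).dotProduct (matCLM M).hasFDerivAt
  refine (((hquad.const_mul (1 / 2 : ℝ)).sub (dotCLM b).hasFDerivAt).add_const c).congr_fderiv ?_
  ext v
  have hsymm : x ⬝ᵥ M *ᵥ v = M *ᵥ x ⬝ᵥ v := by
    rw [dotProduct_mulVec, ← mulVec_transpose, hM.eq, dotProduct_comm]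
  simp [matCLM, sub_dotProduct, hsymm]
  ring

lemma differentiable_qvec {n m : ℕ} {A : Fin m → Matrix (Fin n) (Fin n) ℝ}
    (hA : ∀ i, (A i).IsSymm) (b : Fin m → Fin n → ℝ) (c : Fin m → ℝ) :
    Differentiable ℝ (qvec A b c) := fun x =>
  differentiableAt_pi.2 fun k => (hasFDerivAt_qf (hA k) (b k) (c k) x).differentiableAt

lemma exists_pos_sub_le_of_hasFDerivAt {g : E → ℝ} {G : E →L[ℝ] ℝ} {y : E} {s : Set E}
    (hg : HasFDerivAt g G y) (hs : s ∈ 𝓝 y) (u : E) {r : ℝ} (hr : G u < r) :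
    ∃ t > 0, y + t • u ∈ s ∧ g (y + t • u) - g y ≤ t * r := by
  have hline : HasDerivAt (fun t : ℝ => y + t • u) u 0 := by
    simpa using ((hasDerivAt_id (0 : ℝ)).smul_const u).const_add y
  have hderiv : HasDerivAt (fun t : ℝ => g (y + t • u)) (G u) 0 := by
    simpa using (zero_smul ℝ u ▸ add_zero y ▸ hg).comp_hasDerivAt (0 : ℝ) hline
  have hslope := hderiv.hasDerivWithinAt.limsup_slope_le' (s := Set.Ioi 0) (by simp) hr
  have hmem : ∀ᶠ t in 𝓝[>] (0 : ℝ), y + t • u ∈ s :=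
    nhdsWithin_le_nhds (hline.continuousAt.preimage_mem_nhds (by simpa using hs))
  obtain ⟨t, hts, htm, htp⟩ := (hslope.and (hmem.and self_mem_nhdsWithin)).exists
  refine ⟨t, htp, htm, ?_⟩
  rw [slope_def_field, zero_smul, add_zero, sub_zero, div_lt_iff₀ htp] at hts
  linarith

end Calculus

section DifferentiableInverse

open scoped Matrix.Norms.Operator

lemma isBoundedBilinearMap_mulVec {n : ℕ} :
    IsBoundedBilinearMap ℝ fun p : Matrix (Fin n) (Fin n) ℝ × (Fin n → ℝ) => p.1 *ᵥ p.2 where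
  add_left _ _ _ := add_mulVec _ _ _
  smul_left _ _ _ := smul_mulVec _ _ _
  add_right _ _ _ := mulVec_add _ _ _
  smul_right _ _ _ := mulVec_smul _ _ _
  bound := ⟨1, one_pos, fun M v => by simpa using linfty_opNorm_mulVec M v⟩

lemma differentiableAt_inv_Amat_mulVec_bvec {n m : ℕ} (A0 : Matrix (Fin n) (Fin n) ℝ)
    (A : Fin m → Matrix (Fin n) (Fin n) ℝ) (b0 : Fin n → ℝ) (b : Fin m → Fin n → ℝ)
    {σ : Fin m → ℝ} (hσ : IsUnit (Amat A0 A σ).det) :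
    DifferentiableAt ℝ (fun σ => (Amat A0 A σ)⁻¹ *ᵥ bvec b0 b σ) σ := by
  have hA : DifferentiableAt ℝ (Amat A0 A) σ := by unfold Amat; fun_prop
  have hb : DifferentiableAt ℝ (bvec b0 b) σ := by unfold bvec; fun_prop
  have hinv := (differentiableAt_inverse ((isUnit_iff_isUnit_det _).2 hσ)).comp σ hA
  simp only [nonsing_inv_eq_ringInverse]
  exact (isBoundedBilinearMap_mulVec.differentiableAt _).comp σ (hinv.prodMk hb)

end DifferentiableInverse

section Quadratic

variable {n m : ℕ} {A0 : Matrix (Fin n) (Fin n) ℝ} {A : Fin m → Matrix (Fin n) (Fin n) ℝ}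
  {b0 : Fin n → ℝ} {b : Fin m → Fin n → ℝ} {c : Fin m → ℝ}

lemma isSymm_Amat (hA0 : A0.IsSymm) (hA : ∀ i, (A i).IsSymm) (σ : Fin m → ℝ) :
    (Amat A0 A σ).IsSymm := by
  simp only [Matrix.IsSymm, Amat, transpose_add, transpose_sum, transpose_smul, hA0.eq,
    fun k => (hA k).eq]

lemma qf_add_qvec_dotProduct (σ : Fin m → ℝ) (x : Fin n → ℝ) :
    qf A0 b0 0 x + qvec A b c x ⬝ᵥ σ = qf (Amat A0 A σ) (bvec b0 b σ) (c ⬝ᵥ σ) x := by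
  have hq : qvec A b c x ⬝ᵥ σ =
      1 / 2 * ∑ k, σ k * (x ⬝ᵥ A k *ᵥ x) - ∑ k, σ k * (b k ⬝ᵥ x) + c ⬝ᵥ σ := by
    rw [Finset.mul_sum, ← Finset.sum_sub_distrib, dotProduct, dotProduct, ← Finset.sum_add_distrib]
    exact Finset.sum_congr rfl fun k _ => by simp only [qvec, qf]; ring
  rw [hq]
  simp only [qf, Amat, bvec, add_mulVec, sum_mulVec, smul_mulVec, dotProduct_add, add_dotProduct,
    dotProduct_sum, sum_dotProduct, dotProduct_smul, smul_dotProduct, smul_eq_mul]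
  ring

lemma hasFDerivAt_qf_add_qvec_dotProduct (hA0 : A0.IsSymm) (hA : ∀ i, (A i).IsSymm)
    (σ : Fin m → ℝ) (x : Fin n → ℝ) :
    HasFDerivAt (fun x => qf A0 b0 0 x + qvec A b c x ⬝ᵥ σ)
      (dotCLM (Amat A0 A σ *ᵥ x - bvec b0 b σ)) x := by
  simpa only [qf_add_qvec_dotProduct] using hasFDerivAt_qf (isSymm_Amat hA0 hA σ) _ _ x

lemma qf_le_of_posSemidef {M : Matrix (Fin n) (Fin n) ℝ} (hM : M.PosSemidef) {xb v : Fin n → ℝ}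
    (hxb : M *ᵥ xb = v) (c : ℝ) (x : Fin n → ℝ) : qf M v c xb ≤ qf M v c x := by
  have hsymm : x ⬝ᵥ M *ᵥ xb = xb ⬝ᵥ M *ᵥ x := by
    rw [dotProduct_mulVec, ← mulVec_transpose, ← conjTranspose_eq_transpose_of_trivial, hM.1.eq,
      dotProduct_comm]
  have hnonneg := hM.dotProduct_mulVec_nonneg (x - xb)
  simp only [star_trivial, mulVec_sub, sub_dotProduct, dotProduct_sub] at hnonneg
  rw [qf, qf, ← hxb, dotProduct_comm (M *ᵥ xb), dotProduct_comm (M *ᵥ xb)]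
  nlinarith

end Quadratic

section Conjugate

variable {m : ℕ} {V Vs : (Fin m → ℝ) → ℝ} {dV dVs : Set (Fin m → ℝ)}

lemma isConjugate.bddAbove (hconj : isConjugate V dV Vs dVs) {σ : Fin m → ℝ} (hσ : σ ∈ dVs) :
    BddAbove ((fun y => y ⬝ᵥ σ - V y) '' dV) := by
  rw [hconj.1] at hσ
  exact hσ

lemma isConjugate.dotProduct_sub_le (hconj : isConjugate V dV Vs dVs) {σ y : Fin m → ℝ}
    (hσ : σ ∈ dVs) (hy : y ∈ dV) : y ⬝ᵥ σ - V y ≤ Vs σ := by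
  rw [hconj.2 σ hσ]
  exact le_csSup (hconj.bddAbove hσ) ⟨y, hy, rfl⟩

lemma isConjugate.exists_pos_dotProduct_le_of_hasFDerivAt (hconj : isConjugate V dV Vs dVs)
    {σ y : Fin m → ℝ} (hσ : dVs ∈ 𝓝 σ) (hVs : HasFDerivAt Vs (dotCLM y) σ) (u : Fin m → ℝ)
    {r : ℝ} (hr : y ⬝ᵥ u < r) :
    ∃ t > 0, ∀ z ∈ dV, t * (z ⬝ᵥ u) ≤ t * r + (Vs σ - (z ⬝ᵥ σ - V z)) := by
  obtain ⟨t, ht, hmem, hle⟩ := exists_pos_sub_le_of_hasFDerivAt hVs hσ u hr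
  refine ⟨t, ht, fun z hz => ?_⟩
  have hFY := hconj.dotProduct_sub_le hmem hz
  rw [dotProduct_add, dotProduct_smul, smul_eq_mul] at hFY
  linarith

lemma tendsto_of_forall_eventually_dotProduct_lt {ι : Type*} {l : Filter ι}
    {z : ι → Fin m → ℝ} {y : Fin m → ℝ}
    (h : ∀ u r, y ⬝ᵥ u < r → ∀ᶠ i in l, z i ⬝ᵥ u < r) : Tendsto z l (𝓝 y) := by
  refine tendsto_pi_nhds.2 fun j => tendsto_order.2 ⟨fun a ha => ?_, fun a ha => ?_⟩
  · simpa using h (-Pi.single j 1) (-a) (by simpa using ha)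
  · simpa using h (Pi.single j 1) a (by simpa using ha)

lemma isConjugate.mem_and_le_of_hasFDerivAt (hV : properLscConvex V dV)
    (hconj : isConjugate V dV Vs dVs) {σ y : Fin m → ℝ} (hσ : σ ∈ interior dVs)
    (hVs : HasFDerivAt Vs (dotCLM y) σ) : y ∈ dV ∧ V y ≤ y ⬝ᵥ σ - Vs σ := by
  have hσ' : σ ∈ dVs := interior_subset hσ
  obtain ⟨w, -, hw, hwS⟩ := exists_seq_tendsto_sSup (hV.1.image fun y => y ⬝ᵥ σ - V y)
    (hconj.bddAbove hσ')
  rw [← hconj.2 σ hσ'] at hw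
  choose z hz hzw using hwS
  simp only at hzw
  have hz_tendsto : Tendsto z atTop (𝓝 y) := by
    refine tendsto_of_forall_eventually_dotProduct_lt fun u r hr => ?_
    obtain ⟨t, ht, hbound⟩ := hconj.exists_pos_dotProduct_le_of_hasFDerivAt
      (mem_interior_iff_mem_nhds.1 hσ) hVs u (left_lt_add_div_two.2 hr)
    filter_upwards [hw.eventually (lt_mem_nhds (sub_lt_self (Vs σ)
      (mul_pos ht (sub_pos.2 (add_div_two_lt_right.2 hr)))))] with k hk
    have := hbound (z k) (hz k)
    rw [hzw k] at this
    exact lt_of_mul_lt_mul_left (by linarith) ht.le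
  have hepi : Tendsto (fun k => (z k, z k ⬝ᵥ σ - w k)) atTop (𝓝 (y, y ⬝ᵥ σ - Vs σ)) :=
    hz_tendsto.prodMk_nhds (((continuous_id.dotProduct continuous_const).tendsto y).comp
      hz_tendsto |>.sub hw)
  exact hV.2.2.mem_of_tendsto hepi (Eventually.of_forall fun k => ⟨hz k, by rw [← hzw k]; simp⟩)

lemma isConjugate.mem_subdiff (hconj : isConjugate V dV Vs dVs) {σ y : Fin m → ℝ}
    (hσ : σ ∈ dVs) (hy : y ∈ dV) (hFY : V y ≤ y ⬝ᵥ σ - Vs σ) : σ ∈ subdiff V dV y := by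
  refine ⟨hy, fun y' hy' => ?_⟩
  rw [sub_dotProduct]
  linarith [hconj.dotProduct_sub_le hσ hy']

lemma eq_of_mem_subdiff_of_hasFDerivAt {σ y g : Fin m → ℝ} (hsub : σ ∈ subdiff V dV y)
    (hy : dV ∈ 𝓝 y) (hV : HasFDerivAt V (dotCLM g) y) : g = σ := by
  have hmin : IsLocalMin (fun z => V z - σ ⬝ᵥ z) y := by
    filter_upwards [hy] with z hz
    have := hsub.2 z hz
    rw [sub_dotProduct, dotProduct_comm z, dotProduct_comm y] at this
    linarith
  have hzero := hmin.hasFDerivAt_eq_zero (hV.sub (dotCLM σ).hasFDerivAt)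
  exact dotCLM_injective (sub_eq_zero.1 hzero)

end Conjugate

section Duality

variable {n m : ℕ} {A0 : Matrix (Fin n) (Fin n) ℝ} {A : Fin m → Matrix (Fin n) (Fin n) ℝ}
  {b0 : Fin n → ℝ} {b : Fin m → Fin n → ℝ} {c : Fin m → ℝ} {V Vs : (Fin m → ℝ) → ℝ}
  {dV dVs : Set (Fin m → ℝ)}

lemma qvec_eq_of_hasFDerivAt_dual (hA0 : A0.IsSymm) (hA : ∀ i, (A i).IsSymm)
    {D : (Fin m → ℝ) → ℝ}
    (hD : ∀ σ ∈ dVs, bvec b0 b σ ∈ Set.range (Amat A0 A σ).mulVec →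
      ∀ x, Amat A0 A σ *ᵥ x = bvec b0 b σ → D σ = qf A0 b0 0 x + qvec A b c x ⬝ᵥ σ - Vs σ)
    {σb y : Fin m → ℝ} (hσb : σb ∈ interior dVs) (hS0 : IsUnit (Amat A0 A σb).det)
    (hDcrit : HasFDerivAt D (0 : (Fin m → ℝ) →L[ℝ] ℝ) σb) (hVs : HasFDerivAt Vs (dotCLM y) σb) :
    qvec A b c ((Amat A0 A σb)⁻¹ *ᵥ bvec b0 b σb) = y := by
  set xf : (Fin m → ℝ) → (Fin n → ℝ) := fun σ => (Amat A0 A σ)⁻¹ *ᵥ bvec b0 b σ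
  have hxf : ∀ σ, IsUnit (Amat A0 A σ).det → Amat A0 A σ *ᵥ xf σ = bvec b0 b σ := fun σ hσ => by
    rw [mulVec_mulVec, mul_nonsing_inv _ hσ, one_mulVec]
  have hdet : ∀ᶠ σ in 𝓝 σb, IsUnit (Amat A0 A σ).det := by
    have hcont : Continuous fun σ => (Amat A0 A σ).det := by
      unfold Amat
      fun_prop
    simpa only [isUnit_iff_ne_zero] using hcont.continuousAt.eventually_ne hS0.ne_zero
  -- The first summand is stationary at `σb` because `xf σb` solves `A(σb) x = b(σb)`.
  have hDeq : D =ᶠ[𝓝 σb] fun σ => (qf A0 b0 0 (xf σ) + qvec A b c (xf σ) ⬝ᵥ σb)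
      + qvec A b c (xf σ) ⬝ᵥ (σ - σb) - Vs σ := by
    filter_upwards [hdet, isOpen_interior.mem_nhds hσb] with σ hσ hσint
    rw [hD σ (interior_subset hσint) ⟨xf σ, hxf σ hσ⟩ _ (hxf σ hσ), dotProduct_sub]
    ring
  have hx := (differentiableAt_inv_Amat_mulVec_bvec A0 A b0 b hS0).hasFDerivAt
  have hstat := (hasFDerivAt_qf_add_qvec_dotProduct (b0 := b0) (b := b) (c := c) hA0 hA σb
    (xf σb)).comp σb hx
  have hcoupling := ((differentiable_qvec hA b c (xf σb)).hasFDerivAt.comp σb hx).dotProduct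
    ((hasFDerivAt_id σb).sub_const σb)
  have hD' := ((hstat.add hcoupling).sub hVs).congr_of_eventuallyEq hDeq
  refine sub_eq_zero.1 (dotCLM_injective (ContinuousLinearMap.ext fun v => ?_))
  simpa [hxf σb hS0, sub_dotProduct] using congrArg (· v) (hDcrit.unique hD').symm

lemma hasFDerivAt_primal_eq_zero (hA0 : A0.IsSymm) (hA : ∀ i, (A i).IsSymm) {σ : Fin m → ℝ}
    {x : Fin n → ℝ} (hx : Amat A0 A σ *ᵥ x = bvec b0 b σ)
    (hV : HasFDerivAt V (dotCLM σ) (qvec A b c x)) :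
    HasFDerivAt (fun x => qf A0 b0 0 x + V (qvec A b c x)) (0 : (Fin n → ℝ) →L[ℝ] ℝ) x := by
  have hΞ := hasFDerivAt_qf_add_qvec_dotProduct (b0 := b0) (b := b) (c := c) hA0 hA σ x
  rw [hx, sub_self] at hΞ
  have hgap : HasFDerivAt (fun y => V y - σ ⬝ᵥ y) (0 : (Fin m → ℝ) →L[ℝ] ℝ) (qvec A b c x) :=
    (hV.sub (dotCLM σ).hasFDerivAt).congr_fderiv (sub_self _)
  have hsum := hΞ.add (hgap.comp x (differentiable_qvec hA b c x).hasFDerivAt)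
  refine (hsum.congr_fderiv ?_).congr_of_eventuallyEq (Eventually.of_forall fun x => ?_)
  · ext v
    simp
  · simp only [Pi.add_apply, Function.comp_apply, dotProduct_comm σ]
    ring

lemma lagrangian_le_primal (hconj : isConjugate V dV Vs dVs) {σ : Fin m → ℝ} (hσ : σ ∈ dVs)
    (hpsd : (Amat A0 A σ).PosSemidef) {x' x : Fin n → ℝ} (hx' : Amat A0 A σ *ᵥ x' = bvec b0 b σ)
    (hx : qvec A b c x ∈ dV) :
    qf A0 b0 0 x' + qvec A b c x' ⬝ᵥ σ - Vs σ ≤ qf A0 b0 0 x + V (qvec A b c x) :=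
  calc qf A0 b0 0 x' + qvec A b c x' ⬝ᵥ σ - Vs σ
      = qf (Amat A0 A σ) (bvec b0 b σ) (c ⬝ᵥ σ) x' - Vs σ := by rw [qf_add_qvec_dotProduct]
    _ ≤ qf (Amat A0 A σ) (bvec b0 b σ) (c ⬝ᵥ σ) x - Vs σ := by
      gcongr
      exact qf_le_of_posSemidef hpsd hx' _ _
    _ = qf A0 b0 0 x + qvec A b c x ⬝ᵥ σ - Vs σ := by rw [qf_add_qvec_dotProduct]
    _ ≤ qf A0 b0 0 x + V (qvec A b c x) := by linarith [hconj.dotProduct_sub_le hσ hx]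

end Duality

/-- Let `σ̄ ∈ S₀ ∩ int(dom V*)` be a critical point of `D` and
`x̄ := A(σ̄)⁻¹ b(σ̄)`. Then `(x̄,σ̄)` is a critical point of `Ξ`; consequently `x̄ ∈ X₀`,
`x̄` is a critical point of `f`, `f(x̄) = Ξ(x̄,σ̄) = D(σ̄)`, and if moreover `A(σ̄) ⪰ 0`
then `f(x̄) = inf_{dom f} f = sup_{S_col⁺} D = D(σ̄)`. -/
theorem statement6 {n m : ℕ}
    (A0 : Matrix (Fin n) (Fin n) ℝ) (A : Fin m → Matrix (Fin n) (Fin n) ℝ)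
    (b0 : Fin n → ℝ) (b : Fin m → Fin n → ℝ) (c : Fin m → ℝ)
    (hA0 : A0.IsSymm) (hA : ∀ i, (A i).IsSymm)
    (V Vs : (Fin m → ℝ) → ℝ) (dV dVs : Set (Fin m → ℝ))
    (gV gVs : (Fin m → ℝ) → (Fin m → ℝ))
    (hV : properLscConvex V dV) (hLeg : LegendreType V dV gV)
    (hconj : isConjugate V dV Vs dVs)
    (hgVs : ∀ σ ∈ interior dVs, HasFDerivAt Vs (dotCLM (gVs σ)) σ)
    (D : (Fin m → ℝ) → ℝ)
    (hD : ∀ σ ∈ dVs, bvec b0 b σ ∈ Set.range (Amat A0 A σ).mulVec →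
      ∀ x, Amat A0 A σ *ᵥ x = bvec b0 b σ →
        D σ = qf A0 b0 0 x + qvec A b c x ⬝ᵥ σ - Vs σ)
    (σb : Fin m → ℝ) (hσint : σb ∈ interior dVs)
    (hS0 : IsUnit (Amat A0 A σb).det)
    (hDcrit : HasFDerivAt D (0 : (Fin m → ℝ) →L[ℝ] ℝ) σb)
    (xb : Fin n → ℝ) (hxb : xb = (Amat A0 A σb)⁻¹ *ᵥ bvec b0 b σb) :
    Amat A0 A σb *ᵥ xb = bvec b0 b σb ∧
    qvec A b c xb = gVs σb ∧
    qvec A b c xb ∈ interior dV ∧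
    HasFDerivAt (fun x => qf A0 b0 0 x + V (qvec A b c x))
      (0 : (Fin n → ℝ) →L[ℝ] ℝ) xb ∧
    qf A0 b0 0 xb + V (qvec A b c xb) =
      qf A0 b0 0 xb + qvec A b c xb ⬝ᵥ σb - Vs σb ∧
    qf A0 b0 0 xb + qvec A b c xb ⬝ᵥ σb - Vs σb = D σb ∧
    ((Amat A0 A σb).PosSemidef →
      (∀ x, qvec A b c x ∈ dV →
        qf A0 b0 0 xb + V (qvec A b c xb) ≤ qf A0 b0 0 x + V (qvec A b c x)) ∧
      (∀ σ, σ ∈ dVs → bvec b0 b σ ∈ Set.range (Amat A0 A σ).mulVec →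
        (Amat A0 A σ).PosSemidef → D σ ≤ D σb)) := by
  have h0 : Amat A0 A σb *ᵥ xb = bvec b0 b σb := by
    rw [hxb, mulVec_mulVec, mul_nonsing_inv _ hS0, one_mulVec]
  have hq : qvec A b c xb = gVs σb :=
    hxb ▸ qvec_eq_of_hasFDerivAt_dual hA0 hA hD hσint hS0 hDcrit (hgVs σb hσint)
  have hσ : σb ∈ dVs := interior_subset hσint
  obtain ⟨hdom, hFY⟩ := hconj.mem_and_le_of_hasFDerivAt hV hσint (hq ▸ hgVs σb hσint)
  have hsub := hconj.mem_subdiff hσ hdom hFY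
  have hint : qvec A b c xb ∈ interior dV := by
    by_contra hbd
    simp [hLeg.2.2.1 _ hbd] at hsub
  have hgrad := hLeg.2.1 _ hint
  rw [eq_of_mem_subdiff_of_hasFDerivAt hsub (mem_interior_iff_mem_nhds.1 hint) hgrad] at hgrad
  have hDσb := hD σb hσ ⟨xb, h0⟩ xb h0
  refine ⟨h0, hq, hint, hasFDerivAt_primal_eq_zero hA0 hA h0 hgrad,
    by linarith [hconj.dotProduct_sub_le hσ hdom], hDσb.symm, fun hpsd => ⟨fun x hx => ?_, ?_⟩⟩
  · linarith [lagrangian_le_primal hconj hσ hpsd h0 hx]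
  · rintro σ hσ' ⟨x', hx'⟩ hpsd'
    rw [hD σ hσ' ⟨x', hx'⟩ x' hx', hDσb]
    linarith [lagrangian_le_primal hconj hσ' hpsd' hx' hdom]
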